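/- arXiv:1601.01136 — 4 statements merged into one kernel-verified Lean document; each statement's English description precedes it below -/
import Mathlib

section
/- For every λ > 0 and every ψ ∈ L²(ℝ^d), one has (L₀ + V)ψ = λψ if and only if Q_λ ψ = ψ. -/
open MeasureTheory Filter Metric Topology

noncomputable section

/-- Convolution of two functions on `ℝ^d`. -/
def conv {d : ℕ} (f g : EuclideanSpace ℝ (Fin d) → ℝ) : EuclideanSpace ℝ (Fin d) → ℝ :=
  fun x => ∫ y, f (x - y) * g y

/-- `convPow a n` is `a^{*(n+1)}`, the `(n+1)`-fold convolution power of `a`. -/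
def convPow {d : ℕ} (a : EuclideanSpace ℝ (Fin d) → ℝ) : ℕ → EuclideanSpace ℝ (Fin d) → ℝ
  | 0 => a
  | n + 1 => conv a (convPow a n)

/-- `G a lam x = Σ_{n=1}^∞ a^{*n}(x)/(lam+1)^n`. -/
def G {d : ℕ} (a : EuclideanSpace ℝ (Fin d) → ℝ) (lam : ℝ) : EuclideanSpace ℝ (Fin d) → ℝ :=
  fun x => ∑' n : ℕ, convPow a n x / (lam + 1) ^ (n + 1)

/-!
Write `T h = a ⋆ h`, `r = λ + 1 > 1` and `f = V ψ`. As `a` is a bounded probability density, `T`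
maps `L²` into bounded functions and does not increase `sup |·|`, so the terms of
`S = G_λ ⋆ f = Σ r⁻⁽ⁿ⁺¹⁾ Tⁿ⁺¹ f` are dominated by a geometric series and `S` is a Neumann series:
`T S = r S - T f`. With `W = S - (r - V) ψ` this reads `r (S - T ψ) = T W`.
The eigenvalue equation `T ψ = (r - V) ψ` says `S - T ψ = W` a.e., the fixed point equation says
`W = 0` a.e. If `W = 0`, then `r (S - T ψ) = T W = 0`. Conversely, if `S - T ψ = W`, the bounded
function `g = S - T ψ` solves `r g = T g`, and `r sup |g| ≤ sup |g|` forces `g = 0`.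
-/

variable {d : ℕ}

theorem abs_mul_le_add_sq_div_two (s t : ℝ) : |s * t| ≤ (s ^ 2 + t ^ 2) / 2 := by
  have := two_mul_le_add_sq |s| |t|
  rw [sq_abs, sq_abs] at this
  rw [abs_mul]
  linarith

theorem conv_eq_convolution (f g : EuclideanSpace ℝ (Fin d) → ℝ) :
    conv f g = convolution g f (ContinuousLinearMap.mul ℝ ℝ) volume := by
  ext x
  simp only [conv, convolution_def, ContinuousLinearMap.mul_apply', mul_comm]

theorem conv_congr_ae {k g₁ g₂ : EuclideanSpace ℝ (Fin d) → ℝ} (h : g₁ =ᵐ[volume] g₂) :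
    conv k g₁ = conv k g₂ :=
  funext fun x => integral_congr_ae (h.mono fun y hy => congrArg (k (x - y) * ·) hy)

theorem aestronglyMeasurable_conv {k h : EuclideanSpace ℝ (Fin d) → ℝ} (hk : Continuous k)
    (hh : AEStronglyMeasurable h volume) : AEStronglyMeasurable (conv k h) volume :=
  (((hk.comp (continuous_fst.sub continuous_snd)).aestronglyMeasurable).mul
    hh.comp_snd).integral_prod_right'

theorem conv_sub {k g₁ g₂ : EuclideanSpace ℝ (Fin d) → ℝ} {x : EuclideanSpace ℝ (Fin d)}
    (h₁ : Integrable fun y => k (x - y) * g₁ y) (h₂ : Integrable fun y => k (x - y) * g₂ y) :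
    conv k (fun y => g₁ y - g₂ y) x = conv k g₁ x - conv k g₂ x := by
  simp only [conv, mul_sub]
  exact integral_sub h₁ h₂

theorem conv_const_mul (k g : EuclideanSpace ℝ (Fin d) → ℝ) (c : ℝ) (x : EuclideanSpace ℝ (Fin d)) :
    conv k (fun y => c * g y) x = c * conv k g x := by
  simp only [conv, mul_left_comm _ c, integral_const_mul]

theorem conv_div_const (k g : EuclideanSpace ℝ (Fin d) → ℝ) (c : ℝ) (x : EuclideanSpace ℝ (Fin d)) :
    conv k (fun y => g y / c) x = conv k g x / c := by
  simp only [conv, ← mul_div_assoc, integral_div]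

theorem summable_div_pow_succ {q : ℝ} (hq : 1 < q) (M : ℝ) :
    Summable fun n : ℕ => M / q ^ (n + 1) := by
  refine ((summable_nat_add_iff 1).2 ((summable_geometric_of_lt_one (by positivity)
    (inv_lt_one_of_one_lt₀ hq)).mul_left M)).congr fun n => ?_
  rw [inv_pow, div_eq_mul_inv]

structure IsBoundedDensity (C : ℝ) (k : EuclideanSpace ℝ (Fin d) → ℝ) : Prop where
  continuous : Continuous k
  nonneg : ∀ x, 0 ≤ k x
  le : ∀ x, k x ≤ C
  integrable : Integrable k
  integral_eq_one : ∫ x, k x = 1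

namespace IsBoundedDensity

variable {C B r lam : ℝ} {a k h g W : EuclideanSpace ℝ (Fin d) → ℝ}

theorem abs_apply_le (hk : IsBoundedDensity C k) (x : EuclideanSpace ℝ (Fin d)) : |k x| ≤ C :=
  (abs_of_nonneg (hk.nonneg x)).trans_le (hk.le x)

theorem integrable_sq (hk : IsBoundedDensity C k) : Integrable fun y => k y ^ 2 := by
  refine (hk.integrable.const_mul C).mono' (hk.continuous.pow 2).aestronglyMeasurable ?_
  filter_upwards with y
  rw [Real.norm_eq_abs, abs_of_nonneg (sq_nonneg _), sq]
  exact mul_le_mul_of_nonneg_right (hk.le y) (hk.nonneg y)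

theorem integral_sq_le (hk : IsBoundedDensity C k) : ∫ y, k y ^ 2 ≤ C :=
  calc ∫ y, k y ^ 2 ≤ ∫ y, C * k y :=
        integral_mono hk.integrable_sq (hk.integrable.const_mul C) fun y => by
          rw [sq]; exact mul_le_mul_of_nonneg_right (hk.le y) (hk.nonneg y)
    _ = C := by rw [integral_const_mul, hk.integral_eq_one, mul_one]

theorem integrable_mul_of_memLp (hk : IsBoundedDensity C k) (hh : MemLp h 2 volume)
    (x : EuclideanSpace ℝ (Fin d)) : Integrable fun y => k (x - y) * h y :=
  (((hk.integrable_sq.comp_sub_left x).add hh.integrable_sq).div_const 2).mono'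
    ((hk.continuous.comp (continuous_const.sub continuous_id)).aestronglyMeasurable.mul hh.1)
    (Eventually.of_forall fun y => abs_mul_le_add_sq_div_two (k (x - y)) (h y))

theorem integral_norm_mul_le_of_memLp (hk : IsBoundedDensity C k) (hh : MemLp h 2 volume)
    (x : EuclideanSpace ℝ (Fin d)) :
    ∫ y, ‖k (x - y) * h y‖ ≤ (C + ∫ y, h y ^ 2) / 2 :=
  calc ∫ y, ‖k (x - y) * h y‖ ≤ ∫ y, (k (x - y) ^ 2 + h y ^ 2) / 2 :=
        integral_mono (hk.integrable_mul_of_memLp hh x).norm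
          (((hk.integrable_sq.comp_sub_left x).add hh.integrable_sq).div_const 2)
          fun y => abs_mul_le_add_sq_div_two (k (x - y)) (h y)
    _ = ((∫ y, k y ^ 2) + ∫ y, h y ^ 2) / 2 := by
        rw [integral_div, integral_add (hk.integrable_sq.comp_sub_left x) hh.integrable_sq,
          integral_sub_left_eq_self (fun y => k y ^ 2) volume x]
    _ ≤ (C + ∫ y, h y ^ 2) / 2 := by linarith [hk.integral_sq_le]

theorem abs_conv_le_of_memLp (hk : IsBoundedDensity C k) (hh : MemLp h 2 volume)
    (x : EuclideanSpace ℝ (Fin d)) : |conv k h x| ≤ (C + ∫ y, h y ^ 2) / 2 :=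
  (abs_integral_le_integral_abs).trans (hk.integral_norm_mul_le_of_memLp hh x)

theorem integrable_mul_of_bounded (hk : IsBoundedDensity C k) (hh : AEStronglyMeasurable h volume)
    (hB : ∀ y, |h y| ≤ B) (x : EuclideanSpace ℝ (Fin d)) : Integrable fun y => k (x - y) * h y :=
  ((hk.integrable.comp_sub_left x).mul_const B).mono'
    ((hk.continuous.comp (continuous_const.sub continuous_id)).aestronglyMeasurable.mul hh)
    (Eventually.of_forall fun y => by
      rw [Real.norm_eq_abs, abs_mul, abs_of_nonneg (hk.nonneg _)]
      exact mul_le_mul_of_nonneg_left (hB y) (hk.nonneg _))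

theorem integral_norm_mul_le_of_bounded (hk : IsBoundedDensity C k)
    (hh : AEStronglyMeasurable h volume) (hB : ∀ y, |h y| ≤ B) (x : EuclideanSpace ℝ (Fin d)) :
    ∫ y, ‖k (x - y) * h y‖ ≤ B :=
  calc ∫ y, ‖k (x - y) * h y‖ ≤ ∫ y, k (x - y) * B :=
        integral_mono (hk.integrable_mul_of_bounded hh hB x).norm
          ((hk.integrable.comp_sub_left x).mul_const B) fun y => by
            rw [Real.norm_eq_abs, abs_mul, abs_of_nonneg (hk.nonneg _)]
            exact mul_le_mul_of_nonneg_left (hB y) (hk.nonneg _)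
    _ = B := by
        rw [integral_mul_const, integral_sub_left_eq_self k volume x, hk.integral_eq_one, one_mul]

theorem abs_conv_le_of_bounded (hk : IsBoundedDensity C k) (hh : AEStronglyMeasurable h volume)
    (hB : ∀ y, |h y| ≤ B) (x : EuclideanSpace ℝ (Fin d)) : |conv k h x| ≤ B :=
  (abs_integral_le_integral_abs).trans (hk.integral_norm_mul_le_of_bounded hh hB x)

protected theorem conv (ha : IsBoundedDensity C a) (hk : IsBoundedDensity C k) :
    IsBoundedDensity C (conv a k) where
  continuous := by
    rw [conv_eq_convolution]
    refine BddAbove.continuous_convolution_right_of_integrable _ ⟨C, ?_⟩ hk.integrable ha.continuous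
    rintro _ ⟨x, rfl⟩
    exact (Real.norm_of_nonneg (ha.nonneg x)).trans_le (ha.le x)
  nonneg x := integral_nonneg fun y => mul_nonneg (ha.nonneg _) (hk.nonneg _)
  le x := (le_abs_self _).trans <|
    ha.abs_conv_le_of_bounded hk.continuous.aestronglyMeasurable hk.abs_apply_le x
  integrable := by
    rw [conv_eq_convolution]
    exact hk.integrable.integrable_convolution _ ha.integrable
  integral_eq_one := by
    rw [conv_eq_convolution, integral_convolution _ hk.integrable ha.integrable,
      hk.integral_eq_one, ha.integral_eq_one, ContinuousLinearMap.mul_apply', one_mul]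

protected theorem convPow (ha : IsBoundedDensity C a) : ∀ n, IsBoundedDensity C (convPow a n)
  | 0 => ha
  | n + 1 => ha.conv (ha.convPow n)

theorem conv_conv (ha : IsBoundedDensity C a) (hk : IsBoundedDensity C k) (hh : MemLp h 2 volume)
    (x : EuclideanSpace ℝ (Fin d)) : conv a (conv k h) x = conv (conv a k) h x := by
  have norm_k (y) : ‖k y‖ = k y := Real.norm_of_nonneg (hk.nonneg y)
  have norm_a (y) : ‖a y‖ = a y := Real.norm_of_nonneg (ha.nonneg y)
  simp only [conv_eq_convolution]
  refine convolution_assoc _ _ _ _ (fun _ _ _ => mul_assoc _ _ _) hh.1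
    hk.continuous.aestronglyMeasurable ha.continuous.aestronglyMeasurable
    (Eventually.of_forall fun y => ?_) (Eventually.of_forall fun y => ?_) ?_
  · simpa only [ConvolutionExistsAt, ContinuousLinearMap.mul_apply', mul_comm]
      using hk.integrable_mul_of_memLp hh y
  · simpa only [ConvolutionExistsAt, ContinuousLinearMap.mul_apply', norm_k, norm_a, mul_comm]
      using ha.integrable_mul_of_bounded hk.continuous.aestronglyMeasurable hk.abs_apply_le y
  · simpa only [ConvolutionExistsAt, ContinuousLinearMap.mul_apply', norm_k, norm_a,
      ← conv_eq_convolution, mul_comm] using (ha.conv hk).integrable_mul_of_memLp hh.norm x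

theorem integral_mul_sub_eq_conv_sub (hk : IsBoundedDensity C k) (hh : MemLp h 2 volume)
    (x : EuclideanSpace ℝ (Fin d)) :
    ∫ y, k (x - y) * (h y - h x) = conv k h x - h x := by
  simp only [mul_sub]
  rw [integral_sub (hk.integrable_mul_of_memLp hh x) ((hk.integrable.comp_sub_left x).mul_const _),
    integral_mul_const, integral_sub_left_eq_self k volume x, hk.integral_eq_one, one_mul]
  rfl

theorem conv_tsum (hk : IsBoundedDensity C k) {g : ℕ → EuclideanSpace ℝ (Fin d) → ℝ} {b : ℕ → ℝ}
    (hg : ∀ n, AEStronglyMeasurable (g n) volume) (hgb : ∀ n y, |g n y| ≤ b n) (hb : Summable b)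
    (x : EuclideanSpace ℝ (Fin d)) : conv k (fun y => ∑' n, g n y) x = ∑' n, conv k (g n) x := by
  simp only [conv, ← tsum_mul_left]
  exact (integral_tsum_of_summable_integral_norm
    (fun n => hk.integrable_mul_of_bounded (hg n) (hgb n) x)
    (hb.of_nonneg_of_le (fun n => integral_nonneg fun _ => norm_nonneg _)
      fun n => hk.integral_norm_mul_le_of_bounded (hg n) (hgb n) x)).symm

theorem eq_zero_of_mul_eq_conv (hk : IsBoundedDensity C k) (hr : 1 < r)
    (hg : AEStronglyMeasurable g volume) (hB : ∀ x, |g x| ≤ B) (hfix : ∀ x, r * g x = conv k g x) :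
    g = 0 := by
  have hbdd : BddAbove (Set.range fun x => |g x|) := ⟨B, by rintro _ ⟨x, rfl⟩; exact hB x⟩
  set M := ⨆ x, |g x|
  have hle (x) : |g x| ≤ M := le_ciSup hbdd x
  have hM : M ≤ M / r := ciSup_le fun x => by
    rw [le_div_iff₀ (by linarith), mul_comm, ← abs_of_pos (by linarith : 0 < r), ← abs_mul,
      hfix x]
    exact hk.abs_conv_le_of_bounded hg hle x
  have hM0 : M ≤ 0 := by
    rw [le_div_iff₀ (by linarith)] at hM
    nlinarith [(abs_nonneg (g 0)).trans (hle 0)]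
  funext x
  exact abs_nonpos_iff.1 ((hle x).trans hM0)

theorem ae_eq_iff_ae_eq_zero_of_mul_eq_conv (hk : IsBoundedDensity C k) (hr : 1 < r)
    (hg : AEStronglyMeasurable g volume) (hB : ∀ x, |g x| ≤ B) (hgW : ∀ x, r * g x = conv k W x) :
    g =ᵐ[volume] W ↔ W =ᵐ[volume] 0 := by
  constructor
  · intro hg_ae
    have hg0 : g = 0 := hk.eq_zero_of_mul_eq_conv hr hg hB fun x => by
      rw [hgW, conv_congr_ae hg_ae.symm]
    exact hg0 ▸ hg_ae.symm
  · intro hW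
    have hg0 : g = 0 := funext fun x => by
      have := hgW x
      rw [conv_congr_ae hW] at this
      simpa [conv, (by linarith : r ≠ 0)] using this
    exact hg0 ▸ hW.symm

theorem continuous_G (ha : IsBoundedDensity C a) (hlam : 0 < lam) : Continuous (G a lam) :=
  continuous_tsum (fun n => (ha.convPow n).continuous.div_const _)
    (summable_div_pow_succ (lt_add_of_pos_left 1 hlam) C) fun n x => by
      rw [Real.norm_eq_abs, abs_div, abs_of_nonneg ((ha.convPow n).nonneg x),
        abs_of_pos (by positivity)]
      exact div_le_div_of_nonneg_right ((ha.convPow n).le x) (by positivity)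

theorem abs_conv_convPow_div_le (ha : IsBoundedDensity C a) (hlam : 0 < lam)
    (hh : MemLp h 2 volume) (n : ℕ) (x : EuclideanSpace ℝ (Fin d)) :
    |conv (convPow a n) h x / (lam + 1) ^ (n + 1)|
      ≤ (C + ∫ y, h y ^ 2) / 2 / (lam + 1) ^ (n + 1) := by
  rw [abs_div, abs_of_pos (by positivity : (0 : ℝ) < (lam + 1) ^ (n + 1))]
  exact div_le_div_of_nonneg_right ((ha.convPow n).abs_conv_le_of_memLp hh x) (by positivity)

theorem conv_G_eq_tsum (ha : IsBoundedDensity C a) (hlam : 0 < lam) (hh : MemLp h 2 volume)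
    (x : EuclideanSpace ℝ (Fin d)) :
    conv (G a lam) h x = ∑' n, conv (convPow a n) h x / (lam + 1) ^ (n + 1) := by
  have hsum : Summable fun n => ∫ y, ‖convPow a n (x - y) * h y / (lam + 1) ^ (n + 1)‖ := by
    refine (summable_div_pow_succ (lt_add_of_pos_left 1 hlam)
      ((C + ∫ y, h y ^ 2) / 2)).of_nonneg_of_le
      (fun n => integral_nonneg fun _ => norm_nonneg _) fun n => ?_
    simp only [norm_div, integral_div,
      Real.norm_of_nonneg (by positivity : (0 : ℝ) ≤ (lam + 1) ^ (n + 1))]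
    exact div_le_div_of_nonneg_right ((ha.convPow n).integral_norm_mul_le_of_memLp hh x)
      (by positivity)
  simp only [conv, G, ← tsum_mul_right, div_mul_eq_mul_div]
  rw [← integral_tsum_of_summable_integral_norm
    (fun n => ((ha.convPow n).integrable_mul_of_memLp hh x).div_const _) hsum]
  simp only [integral_div]

theorem exists_abs_conv_G_le (ha : IsBoundedDensity C a) (hlam : 0 < lam)
    (hh : MemLp h 2 volume) :
    ∃ B, ∀ x, |conv (G a lam) h x| ≤ B :=
  ⟨_, fun x => by
    rw [ha.conv_G_eq_tsum hlam hh, ← Real.norm_eq_abs]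
    refine tsum_of_norm_bounded (summable_div_pow_succ (lt_add_of_pos_left 1 hlam)
      ((C + ∫ y, h y ^ 2) / 2)).hasSum fun n => ?_
    exact ha.abs_conv_convPow_div_le hlam hh n x⟩

theorem conv_conv_G (ha : IsBoundedDensity C a) (hlam : 0 < lam) (hh : MemLp h 2 volume)
    (x : EuclideanSpace ℝ (Fin d)) :
    conv a (conv (G a lam) h) x = (lam + 1) * conv (G a lam) h x - conv a h x := by
  have hq : 1 < lam + 1 := lt_add_of_pos_left 1 hlam
  have hsum : Summable fun n => conv (convPow a n) h x / (lam + 1) ^ (n + 1) :=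
    .of_norm_bounded (summable_div_pow_succ hq _) fun n => ha.abs_conv_convPow_div_le hlam hh n x
  have hterm (n : ℕ) : conv a (fun y => conv (convPow a n) h y / (lam + 1) ^ (n + 1)) x
      = (lam + 1) * (conv (convPow a (n + 1)) h x / (lam + 1) ^ (n + 1 + 1)) := by
    rw [conv_div_const, ha.conv_conv (ha.convPow n) hh, pow_succ _ (n + 1)]
    field_simp
    rfl
  rw [funext (ha.conv_G_eq_tsum hlam hh),
    ha.conv_tsum (g := fun n y => conv (convPow a n) h y / (lam + 1) ^ (n + 1))
    (fun n => (aestronglyMeasurable_conv (ha.convPow n).continuous hh.1).mul_const _)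
    (ha.abs_conv_convPow_div_le hlam hh) (summable_div_pow_succ hq _), tsum_congr hterm,
    tsum_mul_left]
  beta_reduce
  rw [hsum.tsum_eq_zero_add, mul_add, zero_add, pow_one,
    mul_div_cancel₀ _ (by positivity : lam + 1 ≠ 0)]
  exact (add_sub_cancel_left _ _).symm

theorem mul_sub_conv_eq_conv_sub {u f : EuclideanSpace ℝ (Fin d) → ℝ} (ha : IsBoundedDensity C a)
    (hlam : 0 < lam) (hu : MemLp u 2 volume) (hf : MemLp f 2 volume)
    (x : EuclideanSpace ℝ (Fin d)) :
    (lam + 1) * (conv (G a lam) f x - conv a u x)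
      = conv a (fun y => conv (G a lam) f y - ((lam + 1) * u y - f y)) x := by
  obtain ⟨B, hB⟩ := ha.exists_abs_conv_G_le hlam hf
  rw [conv_sub (g₂ := fun y => (lam + 1) * u y - f y)
      (ha.integrable_mul_of_bounded (aestronglyMeasurable_conv (ha.continuous_G hlam) hf.1) hB x)
      (ha.integrable_mul_of_memLp ((hu.const_mul _).sub hf) x),
    conv_sub (ha.integrable_mul_of_memLp (hu.const_mul _) x) (ha.integrable_mul_of_memLp hf x),
    conv_const_mul, ha.conv_conv_G hlam hf]
  ring

end IsBoundedDensity

theorem eigen_equation_iff_Q_fixed_point_general (d : ℕ)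
    (a : EuclideanSpace ℝ (Fin d) → ℝ)
    (ha_cont : Continuous a) (ha_bdd : ∃ C, ∀ x, |a x| ≤ C)
    (ha_nonneg : ∀ x, 0 ≤ a x)
    (ha_int : Integrable a) (ha_mass : ∫ x, a x = 1)
    (L₀ : Lp ℝ 2 (volume : Measure (EuclideanSpace ℝ (Fin d))) →L[ℝ]
          Lp ℝ 2 (volume : Measure (EuclideanSpace ℝ (Fin d))))
    (hL₀ : ∀ u : Lp ℝ 2 (volume : Measure (EuclideanSpace ℝ (Fin d))),
      (L₀ u : EuclideanSpace ℝ (Fin d) → ℝ) =ᵐ[volume] fun x => ∫ y, a (x - y) * (u y - u x))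
    (V : EuclideanSpace ℝ (Fin d) → ℝ) (hV_cont : Continuous V)
    (hV01 : ∀ x, 0 ≤ V x ∧ V x ≤ 1)
    (Vop : Lp ℝ 2 (volume : Measure (EuclideanSpace ℝ (Fin d))) →L[ℝ]
           Lp ℝ 2 (volume : Measure (EuclideanSpace ℝ (Fin d))))
    (hVop : ∀ u : Lp ℝ 2 (volume : Measure (EuclideanSpace ℝ (Fin d))),
      (Vop u : EuclideanSpace ℝ (Fin d) → ℝ) =ᵐ[volume] fun x => V x * u x)
    (lam : ℝ) (hlam : 0 < lam)
    (Q : Lp ℝ 2 (volume : Measure (EuclideanSpace ℝ (Fin d))) →L[ℝ]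
         Lp ℝ 2 (volume : Measure (EuclideanSpace ℝ (Fin d))))
    (hQ : ∀ u : Lp ℝ 2 (volume : Measure (EuclideanSpace ℝ (Fin d))),
      (Q u : EuclideanSpace ℝ (Fin d) → ℝ) =ᵐ[volume]
        fun x => (lam + 1 - V x)⁻¹ * ∫ y, G a lam (x - y) * V y * u y) :
    ∀ ψ : Lp ℝ 2 (volume : Measure (EuclideanSpace ℝ (Fin d))),
      (L₀ + Vop) ψ = lam • ψ ↔ Q ψ = ψ := by
  obtain ⟨C, hC⟩ := ha_bdd
  have ha : IsBoundedDensity C a :=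
    ⟨ha_cont, ha_nonneg, fun x => (le_abs_self _).trans (hC x), ha_int, ha_mass⟩
  intro ψ
  have hψ : MemLp ψ 2 volume := Lp.memLp ψ
  have hVψ : MemLp (fun y => V y * ψ y) 2 volume :=
    hψ.of_le (hV_cont.aestronglyMeasurable.mul hψ.1) (Eventually.of_forall fun y => by
      rw [norm_mul, Real.norm_of_nonneg (hV01 y).1]
      exact mul_le_of_le_one_left (norm_nonneg _) (hV01 y).2)
  set S := conv (G a lam) fun y => V y * ψ y
  have heig : (L₀ + Vop) ψ = lam • ψ ↔
      (fun x => S x - conv a ψ x) =ᵐ[volume] fun x => S x - ((lam + 1) * ψ x - V x * ψ x) := by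
    have hL : ⇑((L₀ + Vop) ψ) =ᵐ[volume] fun x => conv a ψ x - ψ x + V x * ψ x := by
      filter_upwards [Lp.coeFn_add (L₀ ψ) (Vop ψ), hL₀ ψ, hVop ψ] with x h₁ h₂ h₃
      rw [add_apply, h₁, Pi.add_apply, h₂, h₃, ha.integral_mul_sub_eq_conv_sub hψ x]
    rw [Lp.ext_iff, hL.congr_left, (Lp.coeFn_smul lam ψ).congr_right]
    refine eventually_congr (Eventually.of_forall fun x => ?_)
    simp only [Pi.smul_apply, smul_eq_mul]
    constructor <;> intro h <;> linarith
  have hfix : Q ψ = ψ ↔ (fun x => S x - ((lam + 1) * ψ x - V x * ψ x)) =ᵐ[volume] 0 := by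
    rw [Lp.ext_iff, (hQ ψ).congr_left]
    refine eventually_congr (Eventually.of_forall fun x => ?_)
    have hS : ∫ y, G a lam (x - y) * V y * ψ y = S x := by simp only [S, conv, mul_assoc]
    beta_reduce
    rw [hS, inv_mul_eq_iff_eq_mul₀ (by linarith [(hV01 x).2]), Pi.zero_apply, sub_eq_zero, sub_mul]
  obtain ⟨B, hB⟩ := ha.exists_abs_conv_G_le hlam hVψ
  rw [heig, hfix]
  exact ha.ae_eq_iff_ae_eq_zero_of_mul_eq_conv (by linarith)
    ((aestronglyMeasurable_conv (ha.continuous_G hlam) hVψ.1).sub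
      (aestronglyMeasurable_conv ha.continuous hψ.1))
    (fun x => (abs_sub _ _).trans (add_le_add (hB x) (ha.abs_conv_le_of_memLp hψ x)))
    (ha.mul_sub_conv_eq_conv_sub hlam hψ hVψ)

/-- For every `λ > 0` and `ψ ∈ L²(ℝ^d)`:
`(L₀ + V)ψ = λψ` if and only if `Q_λ ψ = ψ`. -/
theorem eigen_equation_iff_Q_fixed_point (d : ℕ) (hd : 1 ≤ d)
    (a : EuclideanSpace ℝ (Fin d) → ℝ)
    (ha_cont : Continuous a) (ha_bdd : ∃ C, ∀ x, |a x| ≤ C)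
    (ha_nonneg : ∀ x, 0 ≤ a x) (ha_even : ∀ x, a (-x) = a x)
    (ha_int : Integrable a) (ha_mass : ∫ x, a x = 1)
    (L₀ : Lp ℝ 2 (volume : Measure (EuclideanSpace ℝ (Fin d))) →L[ℝ]
          Lp ℝ 2 (volume : Measure (EuclideanSpace ℝ (Fin d))))
    (hL₀ : ∀ u : Lp ℝ 2 (volume : Measure (EuclideanSpace ℝ (Fin d))),
      (L₀ u : EuclideanSpace ℝ (Fin d) → ℝ) =ᵐ[volume] fun x => ∫ y, a (x - y) * (u y - u x))
    (V : EuclideanSpace ℝ (Fin d) → ℝ) (hV_cont : Continuous V)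
    (hV01 : ∀ x, 0 ≤ V x ∧ V x ≤ 1)
    (hV0 : Tendsto V (cocompact (EuclideanSpace ℝ (Fin d))) (𝓝 0))
    (Vop : Lp ℝ 2 (volume : Measure (EuclideanSpace ℝ (Fin d))) →L[ℝ]
           Lp ℝ 2 (volume : Measure (EuclideanSpace ℝ (Fin d))))
    (hVop : ∀ u : Lp ℝ 2 (volume : Measure (EuclideanSpace ℝ (Fin d))),
      (Vop u : EuclideanSpace ℝ (Fin d) → ℝ) =ᵐ[volume] fun x => V x * u x)
    (lam : ℝ) (hlam : 0 < lam)
    (Q : Lp ℝ 2 (volume : Measure (EuclideanSpace ℝ (Fin d))) →L[ℝ]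
         Lp ℝ 2 (volume : Measure (EuclideanSpace ℝ (Fin d))))
    (hQ : ∀ u : Lp ℝ 2 (volume : Measure (EuclideanSpace ℝ (Fin d))),
      (Q u : EuclideanSpace ℝ (Fin d) → ℝ) =ᵐ[volume]
        fun x => (lam + 1 - V x)⁻¹ * ∫ y, G a lam (x - y) * V y * u y) :
    ∀ ψ : Lp ℝ 2 (volume : Measure (EuclideanSpace ℝ (Fin d))),
      (L₀ + Vop) ψ = lam • ψ ↔ Q ψ = ψ :=
  eigen_equation_iff_Q_fixed_point_general d a ha_cont ha_bdd ha_nonneg ha_int ha_mass L₀ hL₀ V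
    hV_cont hV01 Vop hVop lam hlam Q hQ
end
end

section
/- If ψ ∈ C_b(ℝ^d) satisfies (L₀ + V)ψ = λψ for some λ > 0, then ψ(x) → 0 as |x| → ∞. -/
/-!
Evaluated pointwise, the eigen-equation reads `(λ + 1 - V x) ψ x = ∫ a (x - y) ψ y dy`.
Averaging against the probability density `a (x - ·)` cannot raise the limit superior `m` of
`|ψ|` at infinity, because `a` has little mass outside a large ball. Since `V → 0`, the left side
has limit superior `(λ + 1) m`, so `(λ + 1) m ≤ m` and `m = 0`.
-/

open MeasureTheory Filter Metric Topology

theorem tendsto_setIntegral_compl_closedBall {E F : Type*} [PseudoMetricSpace E]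
    [MeasurableSpace E] [OpensMeasurableSpace E] [NormedAddCommGroup F] [NormedSpace ℝ F]
    {μ : Measure E} {f : E → F} (hf : Integrable f μ) (x₀ : E) :
    Tendsto (fun R : ℝ ↦ ∫ z in (closedBall x₀ R)ᶜ, f z ∂μ) atTop (𝓝 0) := by
  have h := tendsto_setIntegral_of_antitone (s := fun R : ℝ ↦ (closedBall x₀ R)ᶜ)
    (fun _ ↦ measurableSet_closedBall.compl)
    (fun _ _ h ↦ Set.compl_subset_compl.2 (closedBall_subset_closedBall h)) ⟨0, hf.integrableOn⟩
  rwa [Set.iInter_eq_empty_iff.2 fun z ↦ ⟨dist z x₀, by simp⟩, setIntegral_empty] at h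

theorem Filter.tendsto_zero_of_forall_eventually_mul_le {X : Type*} {l : Filter X}
    {f w : X → ℝ} {k B : ℝ} (hk : 1 < k) (hw : Tendsto w l (𝓝 k))
    (hf_nonneg : ∀ x, 0 ≤ f x) (hf_le : ∀ x, f x ≤ B)
    (h : ∀ c, 0 ≤ c → (∀ᶠ x in l, f x ≤ c) → ∀ ε > 0, ∀ᶠ x in l, w x * f x ≤ c + ε) :
    Tendsto f l (𝓝 0) := by
  rcases l.eq_or_neBot with rfl | hl
  · exact tendsto_bot
  have hbdd : IsBoundedUnder (· ≤ ·) l f := isBoundedUnder_of ⟨B, hf_le⟩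
  set m := limsup f l
  have hm : 0 ≤ m := le_limsup_of_frequently_le (.of_forall hf_nonneg) hbdd
  have hstep : ∀ ε, 0 < ε → ε < k → (k - ε) * m ≤ m + 2 * ε := by
    intro ε hε hεk
    have hfm : ∀ᶠ x in l, f x ≤ m + ε :=
      (eventually_lt_of_limsup_lt (by linarith) hbdd).mono fun _ ↦ le_of_lt
    have hbound : ∀ᶠ x in l, f x ≤ (m + 2 * ε) / (k - ε) := by
      filter_upwards [h _ (by linarith) hfm ε hε, hw.eventually (eventually_gt_nhds
        (by linarith : k - ε < k))] with x hwf hwx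
      rw [le_div_iff₀ (by linarith)]
      nlinarith [hf_nonneg x]
    have := limsup_le_of_le (isCoboundedUnder_le_of_le l hf_nonneg) hbound
    rwa [le_div_iff₀ (by linarith), mul_comm] at this
  have hkm : k * m ≤ m := by
    refine le_of_tendsto_of_tendsto (f := fun ε ↦ (k - ε) * m) (b := 𝓝[>] 0) ?_ ?_
      (mem_of_superset (Ioo_mem_nhdsGT (by linarith : (0 : ℝ) < k)) fun ε hε ↦
        hstep ε hε.1 hε.2)
    all_goals
      exact tendsto_nhdsWithin_of_tendsto_nhds (Continuous.tendsto' (by fun_prop) _ _ (by simp))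
  have hm0 : m ≤ 0 := by nlinarith
  exact tendsto_order.2 ⟨fun b hb ↦ .of_forall fun x ↦ hb.trans_le (hf_nonneg x),
    fun b hb ↦ eventually_lt_of_limsup_lt (hm0.trans_lt hb) hbdd⟩

section Convolution

variable {E : Type*} [NormedAddCommGroup E] [MeasurableSpace E] [BorelSpace E]
  {μ : Measure E} [μ.IsAddLeftInvariant] [μ.IsNegInvariant] {a : E → ℝ}

theorem integral_mul_sub_eq (ha_int : Integrable a μ) (ha_mass : ∫ z, a z ∂μ = 1)
    {u : E → ℝ} {x : E} (hu : Integrable (fun y ↦ a (x - y) * u y) μ) :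
    ∫ y, a (x - y) * (u y - u x) ∂μ = ∫ y, a (x - y) * u y ∂μ - u x := by
  simp_rw [mul_sub]
  rw [integral_sub hu ((ha_int.comp_sub_left x).mul_const _), integral_mul_const,
    integral_sub_left_eq_self, ha_mass, one_mul]

theorem eventually_integral_mul_le_add [ProperSpace E] (ha_nonneg : ∀ z, 0 ≤ a z)
    (ha_int : Integrable a μ) (ha_mass : ∫ z, a z ∂μ = 1) {f : E → ℝ} {B c ε : ℝ}
    (hf_meas : AEStronglyMeasurable f μ) (hf_nonneg : ∀ y, 0 ≤ f y) (hf_le : ∀ y, f y ≤ B)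
    (hc : 0 ≤ c) (hfc : ∀ᶠ y in cocompact E, f y ≤ c) (hε : 0 < ε) :
    ∀ᶠ x in cocompact E, ∫ y, a (x - y) * f y ∂μ ≤ c + ε := by
  have hB : 0 ≤ B := (hf_nonneg 0).trans (hf_le 0)
  obtain ⟨R, hR⟩ := ((tendsto_setIntegral_compl_closedBall ha_int 0).eventually
    (eventually_lt_nhds (by positivity : 0 < ε / (B + 1)))).exists
  set g := (closedBall (0 : E) R)ᶜ.indicator a with hg
  have hg_int : Integrable g μ := ha_int.indicator measurableSet_closedBall.compl
  obtain ⟨K, hK, hKf⟩ := mem_cocompact.1 hfc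
  filter_upwards [mem_cocompact.2 ⟨_, hK.cthickening (r := R), subset_rfl⟩] with x hx
  -- For such `x`, `f y > c` forces `y ∈ K`, hence `x - y` in the tail of `a`.
  have hpt : ∀ y, a (x - y) * f y ≤ c * a (x - y) + B * g (x - y) := by
    intro y
    by_cases hy : y ∈ K
    · have hxy : x - y ∈ (closedBall (0 : E) R)ᶜ := fun hxy ↦
        hx (mem_cthickening_of_dist_le x y R K hy (by simpa [dist_eq_norm] using hxy))
      rw [hg, Set.indicator_of_mem hxy]
      nlinarith [ha_nonneg (x - y), hf_le y]
    · have : 0 ≤ B * g (x - y) := mul_nonneg hB (Set.indicator_nonneg (fun z _ ↦ ha_nonneg z) _)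
      nlinarith [mul_le_mul_of_nonneg_left (hKf hy : f y ≤ c) (ha_nonneg (x - y))]
  have hfa : Integrable (fun y ↦ a (x - y) * f y) μ :=
    (ha_int.comp_sub_left x).mul_bdd hf_meas
      (.of_forall fun y ↦ by simpa [abs_of_nonneg (hf_nonneg y)] using hf_le y)
  calc ∫ y, a (x - y) * f y ∂μ
      ≤ ∫ y, (c * a (x - y) + B * g (x - y)) ∂μ :=
        integral_mono hfa (((ha_int.comp_sub_left x).const_mul c).add
          ((hg_int.comp_sub_left x).const_mul B)) hpt
    _ = c + B * ∫ z in (closedBall (0 : E) R)ᶜ, a z ∂μ := by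
        rw [integral_add (((ha_int.comp_sub_left x).const_mul c))
          ((hg_int.comp_sub_left x).const_mul B), integral_const_mul, integral_const_mul,
          integral_sub_left_eq_self, integral_sub_left_eq_self, ha_mass, mul_one,
          integral_indicator measurableSet_closedBall.compl]
    _ ≤ c + ε := by
        have : B * (ε / (B + 1)) ≤ ε := by
          rw [mul_div_assoc']; exact div_le_of_le_mul₀ (by positivity) hε.le (by nlinarith)
        nlinarith

end Convolution

theorem eigenfunction_Cb_tendsto_zero_general (d : ℕ)
    (a : EuclideanSpace ℝ (Fin d) → ℝ)
    (ha_nonneg : ∀ x, 0 ≤ a x)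
    (ha_int : Integrable a) (ha_mass : ∫ x, a x = 1)
    (L₀ : BoundedContinuousFunction (EuclideanSpace ℝ (Fin d)) ℝ →L[ℝ]
          BoundedContinuousFunction (EuclideanSpace ℝ (Fin d)) ℝ)
    (hL₀ : ∀ u : BoundedContinuousFunction (EuclideanSpace ℝ (Fin d)) ℝ, ∀ x,
      L₀ u x = ∫ y, a (x - y) * (u y - u x))
    (V : EuclideanSpace ℝ (Fin d) → ℝ)
    (hV0 : Tendsto V (cocompact (EuclideanSpace ℝ (Fin d))) (𝓝 0))
    (Vop : BoundedContinuousFunction (EuclideanSpace ℝ (Fin d)) ℝ →L[ℝ]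
           BoundedContinuousFunction (EuclideanSpace ℝ (Fin d)) ℝ)
    (hVop : ∀ u : BoundedContinuousFunction (EuclideanSpace ℝ (Fin d)) ℝ, ∀ x,
      Vop u x = V x * u x)
    (ψ : BoundedContinuousFunction (EuclideanSpace ℝ (Fin d)) ℝ)
    (lam : ℝ) (hlam : 0 < lam) (hψ : (L₀ + Vop) ψ = lam • ψ) :
    Tendsto ψ (cocompact (EuclideanSpace ℝ (Fin d))) (𝓝 0) := by
  have hψ_int : ∀ x, Integrable (fun y ↦ a (x - y) * ψ y) := fun x ↦
    (ha_int.comp_sub_left x).mul_bdd ψ.continuous.aestronglyMeasurable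
      (.of_forall ψ.norm_coe_le_norm)
  have hψ_le : ∀ x, |ψ x| ≤ ‖ψ‖ := fun x ↦ (Real.norm_eq_abs _).symm.trans_le (ψ.norm_coe_le_norm x)
  have heigen : ∀ x, (lam + 1 - V x) * ψ x = ∫ y, a (x - y) * ψ y := fun x ↦ by
    have h := DFunLike.congr_fun hψ x
    simp only [add_apply, BoundedContinuousFunction.add_apply,
      BoundedContinuousFunction.smul_apply, hL₀, hVop, integral_mul_sub_eq ha_int ha_mass
      (hψ_int x), smul_eq_mul] at h
    linarith
  have hsub : ∀ x, (lam + 1 - V x) * |ψ x| ≤ ∫ y, a (x - y) * |ψ y| := fun x ↦ calc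
    _ ≤ |lam + 1 - V x| * |ψ x| := mul_le_mul_of_nonneg_right (le_abs_self _) (abs_nonneg _)
    _ = |∫ y, a (x - y) * ψ y| := by rw [← abs_mul, heigen]
    _ ≤ ∫ y, |a (x - y) * ψ y| := abs_integral_le_integral_abs
    _ = ∫ y, a (x - y) * |ψ y| := by simp_rw [abs_mul, abs_of_nonneg (ha_nonneg _)]
  have hw : Tendsto (fun x ↦ lam + 1 - V x) (cocompact _) (𝓝 (lam + 1)) := by
    simpa using tendsto_const_nhds.sub hV0
  refine (tendsto_zero_iff_abs_tendsto_zero _).2 <| tendsto_zero_of_forall_eventually_mul_le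
    (by linarith) hw (fun x ↦ abs_nonneg (ψ x)) hψ_le fun c hc hψc ε hε ↦ ?_
  filter_upwards [eventually_integral_mul_le_add ha_nonneg ha_int ha_mass
    ψ.continuous.abs.aestronglyMeasurable (fun y ↦ abs_nonneg (ψ y)) hψ_le hc hψc hε] with x hx
  exact (hsub x).trans hx

/-- If `ψ ∈ C_b(ℝ^d)` satisfies `(L₀ + V)ψ = λψ` for some `λ > 0`, then
`ψ(x) → 0` as `|x| → ∞`. -/
theorem eigenfunction_Cb_tendsto_zero (d : ℕ) (hd : 1 ≤ d)
    (a : EuclideanSpace ℝ (Fin d) → ℝ)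
    (ha_cont : Continuous a) (ha_bdd : ∃ C, ∀ x, |a x| ≤ C)
    (ha_nonneg : ∀ x, 0 ≤ a x) (ha_even : ∀ x, a (-x) = a x)
    (ha_int : Integrable a) (ha_mass : ∫ x, a x = 1)
    (L₀ : BoundedContinuousFunction (EuclideanSpace ℝ (Fin d)) ℝ →L[ℝ]
          BoundedContinuousFunction (EuclideanSpace ℝ (Fin d)) ℝ)
    (hL₀ : ∀ u : BoundedContinuousFunction (EuclideanSpace ℝ (Fin d)) ℝ, ∀ x,
      L₀ u x = ∫ y, a (x - y) * (u y - u x))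
    (V : EuclideanSpace ℝ (Fin d) → ℝ) (hV_cont : Continuous V)
    (hV01 : ∀ x, 0 ≤ V x ∧ V x ≤ 1)
    (hV0 : Tendsto V (cocompact (EuclideanSpace ℝ (Fin d))) (𝓝 0))
    (Vop : BoundedContinuousFunction (EuclideanSpace ℝ (Fin d)) ℝ →L[ℝ]
           BoundedContinuousFunction (EuclideanSpace ℝ (Fin d)) ℝ)
    (hVop : ∀ u : BoundedContinuousFunction (EuclideanSpace ℝ (Fin d)) ℝ, ∀ x,
      Vop u x = V x * u x)
    (ψ : BoundedContinuousFunction (EuclideanSpace ℝ (Fin d)) ℝ)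
    (lam : ℝ) (hlam : 0 < lam) (hψ : (L₀ + Vop) ψ = lam • ψ) :
    Tendsto ψ (cocompact (EuclideanSpace ℝ (Fin d))) (𝓝 0) :=
  eigenfunction_Cb_tendsto_zero_general d a ha_nonneg ha_int ha_mass L₀ hL₀ V hV0 Vop hVop ψ lam
    hlam hψ
end

section
/- For every R > 0, writing χ_{B_R} for the indicator function of the ball B_R = {x : |x| < R}, one has 0 ≤ −⟨L₀χ_{B_R}, χ_{B_R}⟩_{L²} ≤ vol(B_R) · ∫_{ℝ^d} a(z) (1 − ((1 − |z|/R)₊)^d) dz; consequently (1/vol(B_R)) ⟨L₀χ_{B_R}, χ_{B_R}⟩_{L²} → 0 as R → ∞. -/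
/-!
Substituting `y = x - z` and applying Fubini,
`⟨L₀ 1_B, 1_B⟩ = -∫ a(z) (|B| - |B ∩ (B + z)|) dz` for every set `B` of finite measure.
For `B = B_R`, the intersection `B_R ∩ (B_R + z)` contains the ball of radius `R - |z|`
about `z`, whose volume is `|B_R| (1 - |z|/R)^d`; this gives both bounds. After division
by `|B_R|` the upper bound tends to `0` by dominated convergence, since `a` is integrable.
-/

open MeasureTheory Filter Metric Topology

noncomputable section

section Profile

variable {F : Type*} [SeminormedAddCommGroup F]

theorem preimage_sub_ball_zero (z : F) (R : ℝ) : (· - z) ⁻¹' ball (0 : F) R = ball z R := by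
  ext x
  simp [dist_eq_norm]

theorem norm_mul_one_sub_max_one_sub_div_pow_le (a : F → ℝ) {R : ℝ} (hR : 0 ≤ R) (z : F)
    (n : ℕ) : ‖a z * (1 - max (1 - ‖z‖ / R) 0 ^ n)‖ ≤ ‖a z‖ := by
  have h_max_le : max (1 - ‖z‖ / R) 0 ≤ 1 :=
    max_le (by linarith [div_nonneg (norm_nonneg z) hR]) zero_le_one
  rw [norm_mul, Real.norm_of_nonneg (sub_nonneg.2 (pow_le_one₀ (le_max_right _ _) h_max_le))]
  exact mul_le_of_le_one_right (norm_nonneg _) (sub_le_self _ (pow_nonneg (le_max_right _ _) n))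

variable [MeasurableSpace F] [OpensMeasurableSpace F] {ν : Measure F}

theorem integrable_mul_one_sub_max_one_sub_div_pow {a : F → ℝ} (ha : Integrable a ν) {R : ℝ}
    (hR : 0 ≤ R) (n : ℕ) : Integrable (fun z => a z * (1 - max (1 - ‖z‖ / R) 0 ^ n)) ν := by
  have h_cont : Continuous fun z : F => 1 - max (1 - ‖z‖ / R) 0 ^ n := by fun_prop
  exact ha.norm.mono' (ha.1.mul h_cont.aestronglyMeasurable)
    (ae_of_all _ (norm_mul_one_sub_max_one_sub_div_pow_le a hR · n))

theorem tendsto_integral_mul_one_sub_max_one_sub_div_pow {a : F → ℝ} (ha : Integrable a ν)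
    (n : ℕ) :
    Tendsto (fun R => ∫ z, a z * (1 - max (1 - ‖z‖ / R) 0 ^ n) ∂ν) atTop (𝓝 0) := by
  have h_lim (z : F) :
      Tendsto (fun R => a z * (1 - max (1 - ‖z‖ / R) 0 ^ n)) atTop (𝓝 0) := by
    have h_ratio : Tendsto (fun R => ‖z‖ / R) atTop (𝓝 0) :=
      tendsto_const_nhds.div_atTop tendsto_id
    have h_max : Tendsto (fun R => max (1 - ‖z‖ / R) 0) atTop (𝓝 1) := by
      simpa using ((tendsto_const_nhds (x := (1 : ℝ))).sub h_ratio).max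
        (tendsto_const_nhds (x := (0 : ℝ)))
    simpa using (tendsto_const_nhds (x := a z)).mul
      ((tendsto_const_nhds (x := (1 : ℝ))).sub (h_max.pow n))
  simpa using tendsto_integral_filter_of_dominated_convergence (fun z => ‖a z‖)
    ((eventually_ge_atTop 0).mono fun R hR =>
      (integrable_mul_one_sub_max_one_sub_div_pow ha hR n).1)
    ((eventually_ge_atTop 0).mono fun R hR =>
      ae_of_all _ (norm_mul_one_sub_max_one_sub_div_pow_le a hR · n))
    ha.norm (ae_of_all _ h_lim)

end Profile

section NonlocalForm

variable {G : Type*} [AddCommGroup G] [MeasurableSpace G] {μ : Measure G}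

/-- The quadratic form `⟨L₀ f, f⟩_{L²}` of the nonlocal operator with kernel `a`. -/
def nonlocalQuadraticForm (a : G → ℝ) (μ : Measure G) (f : G → ℝ) : ℝ :=
  ∫ x, (∫ y, a (x - y) * (f y - f x) ∂μ) * f x ∂μ

theorem inner_eq_nonlocalQuadraticForm {a : G → ℝ} {u v : Lp ℝ 2 μ} {f : G → ℝ}
    (hv : v =ᵐ[μ] fun x => ∫ y, a (x - y) * (u y - u x) ∂μ) (hu : u =ᵐ[μ] f) :
    inner ℝ v u = nonlocalQuadraticForm a μ f := by
  rw [L2.inner_def]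
  refine integral_congr_ae ?_
  filter_upwards [hv, hu] with x hvx hux
  have h_inner : ∫ y, a (x - y) * (u y - u x) ∂μ = ∫ y, a (x - y) * (f y - f x) ∂μ := by
    refine integral_congr_ae ?_
    filter_upwards [hu] with y huy
    rw [huy, hux]
  rw [hvx, h_inner, hux]
  simp [mul_comm]

variable [MeasurableAdd₂ G] [MeasurableNeg G]

theorem nonlocalQuadraticForm_indicator_one [SFinite μ] [μ.IsAddLeftInvariant]
    [μ.IsNegInvariant] {a : G → ℝ} (ha : Integrable a μ) {s : Set G}
    (hs : MeasurableSet s) (hμs : μ s ≠ ⊤) :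
    nonlocalQuadraticForm a μ (s.indicator 1) =
      -∫ z, a z * (μ.real s - μ.real (s ∩ (· - z) ⁻¹' s)) ∂μ := by
  set χ : G → ℝ := s.indicator 1
  have hχ_sq (x : G) : χ x * χ x = χ x := by
    by_cases hx : x ∈ s <;> simp [χ, hx]
  have hχ_inter (z : G) : (fun x => χ x * χ (x - z)) = (s ∩ (· - z) ⁻¹' s).indicator 1 := by
    rw [Set.inter_indicator_one]; rfl
  have hχ_meas : Measurable χ := measurable_const.indicator hs
  have hχ_int : Integrable χ μ := (integrable_indicator_iff hs).2 (integrableOn_const hμs)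
  have h_subst (x : G) : (∫ y, a (x - y) * (χ y - χ x) ∂μ) * χ x =
      ∫ z, a z * (χ x * χ (x - z) - χ x) ∂μ := by
    rw [← integral_mul_const]
    conv_rhs => rw [← integral_sub_left_eq_self _ μ x]
    congr with y
    simp only [sub_sub_cancel]
    linear_combination -a (x - y) * hχ_sq x
  have h_int : Integrable (Function.uncurry fun x z => a z * (χ x * χ (x - z) - χ x))
      (μ.prod μ) := by
    refine (hχ_int.mul_prod ha.norm).mono' ?_ (Eventually.of_forall fun p => ?_)
    · have h_meas : Measurable fun p : G × G => χ p.1 * χ (p.1 - p.2) - χ p.1 := by fun_prop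
      exact ha.1.comp_snd.mul h_meas.aestronglyMeasurable
    · have hp : |χ p.1 * χ (p.1 - p.2) - χ p.1| ≤ χ p.1 := by
        by_cases h₁ : p.1 ∈ s <;> by_cases h₂ : p.1 - p.2 ∈ s <;> simp [χ, h₁, h₂]
      simpa [Function.uncurry, abs_mul, mul_comm] using
        mul_le_mul_of_nonneg_left hp (abs_nonneg (a p.2))
  calc nonlocalQuadraticForm a μ χ
      = ∫ x, ∫ z, a z * (χ x * χ (x - z) - χ x) ∂μ ∂μ := integral_congr_ae (.of_forall h_subst)
    _ = ∫ z, ∫ x, a z * (χ x * χ (x - z) - χ x) ∂μ ∂μ := integral_integral_swap h_int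
    _ = ∫ z, a z * (μ.real (s ∩ (· - z) ⁻¹' s) - μ.real s) ∂μ := by
      refine integral_congr_ae (Eventually.of_forall fun z => ?_)
      dsimp only
      have hs_inter : MeasurableSet (s ∩ (· - z) ⁻¹' s) := hs.inter (measurable_sub_const z hs)
      have h_inter_int : Integrable (fun x => χ x * χ (x - z)) μ := by
        rw [hχ_inter, integrable_indicator_iff hs_inter]
        exact integrableOn_const (measure_ne_top_of_subset Set.inter_subset_left hμs)
      rw [integral_const_mul, integral_sub h_inter_int hχ_int, hχ_inter,
        integral_indicator_one hs_inter, integral_indicator_one hs]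
    _ = _ := by
      rw [← integral_neg]
      simp only [← mul_neg, neg_sub]

end NonlocalForm

section Ball

variable {E : Type*} [NormedAddCommGroup E] [NormedSpace ℝ E] [FiniteDimensional ℝ E]
  [MeasurableSpace E] [BorelSpace E] {μ : Measure E} [μ.IsAddHaarMeasure]

theorem measureReal_ball_mul_le_measureReal_inter_ball {R : ℝ} (hR : 0 < R) (z : E) :
    μ.real (ball 0 R) * max (1 - ‖z‖ / R) 0 ^ Module.finrank ℝ E ≤
      μ.real (ball 0 R ∩ ball z R) := by
  rcases lt_or_ge ‖z‖ R with hz | hz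
  · set t := 1 - ‖z‖ / R
    have ht : 0 < t := sub_pos.2 ((div_lt_one hR).2 hz)
    have htR : t * R = R - ‖z‖ := by rw [sub_mul, div_mul_cancel₀ _ hR.ne', one_mul]
    have h_sub : ball z (t * R) ⊆ ball 0 R ∩ ball z R := by
      refine Set.subset_inter (ball_subset_ball' ?_) (ball_subset_ball ?_) <;>
        simp [htR]
    calc μ.real (ball 0 R) * max t 0 ^ Module.finrank ℝ E = μ.real (ball z (t * R)) := by
          rw [max_eq_left ht.le, measureReal_def, measureReal_def,
            Measure.addHaar_ball_mul_of_pos μ z ht, ENNReal.toReal_mul,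
            ENNReal.toReal_ofReal (by positivity), mul_comm]
      _ ≤ μ.real (ball 0 R ∩ ball z R) := measureReal_mono h_sub
  · have : Nontrivial E := nontrivial_of_ne z 0 fun h => by simp [h] at hz; linarith
    have h_max : max (1 - ‖z‖ / R) 0 = 0 :=
      max_eq_right (by rw [sub_nonpos, le_div_iff₀ hR]; linarith)
    rw [h_max, zero_pow Module.finrank_pos.ne', mul_zero]
    exact measureReal_nonneg

theorem neg_nonlocalQuadraticForm_indicator_ball_mem_Icc {a : E → ℝ} (ha_nonneg : ∀ z, 0 ≤ a z)
    (ha : Integrable a μ) {R : ℝ} (hR : 0 < R) :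
    -nonlocalQuadraticForm a μ ((ball 0 R).indicator 1) ∈ Set.Icc 0
      (μ.real (ball 0 R) * ∫ z, a z * (1 - max (1 - ‖z‖ / R) 0 ^ Module.finrank ℝ E) ∂μ) := by
  rw [nonlocalQuadraticForm_indicator_one ha measurableSet_ball measure_ball_lt_top.ne, neg_neg]
  simp only [preimage_sub_ball_zero]
  have h_nonneg (z : E) : 0 ≤ a z * (μ.real (ball 0 R) - μ.real (ball 0 R ∩ ball z R)) :=
    mul_nonneg (ha_nonneg z)
      (sub_nonneg.2 (measureReal_mono Set.inter_subset_left measure_ball_lt_top.ne))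
  refine ⟨integral_nonneg h_nonneg, ?_⟩
  rw [← integral_const_mul]
  refine integral_mono_of_nonneg (ae_of_all _ h_nonneg)
    ((integrable_mul_one_sub_max_one_sub_div_pow ha hR.le _).const_mul _)
    (ae_of_all _ fun z => ?_)
  dsimp only
  rw [mul_left_comm]
  refine mul_le_mul_of_nonneg_left ?_ (ha_nonneg z)
  linarith [measureReal_ball_mul_le_measureReal_inter_ball (μ := μ) hR z]

end Ball

theorem quadratic_form_indicator_ball_general (d : ℕ)
    (a : EuclideanSpace ℝ (Fin d) → ℝ)
    (ha_nonneg : ∀ x, 0 ≤ a x)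
    (ha_int : Integrable a)
    (L₀ : Lp ℝ 2 (volume : Measure (EuclideanSpace ℝ (Fin d))) →L[ℝ]
          Lp ℝ 2 (volume : Measure (EuclideanSpace ℝ (Fin d))))
    (hL₀ : ∀ u : Lp ℝ 2 (volume : Measure (EuclideanSpace ℝ (Fin d))),
      (L₀ u : EuclideanSpace ℝ (Fin d) → ℝ) =ᵐ[volume] fun x => ∫ y, a (x - y) * (u y - u x))
    (χ : ℝ → Lp ℝ 2 (volume : Measure (EuclideanSpace ℝ (Fin d))))
    (hχ : ∀ R : ℝ, (χ R : EuclideanSpace ℝ (Fin d) → ℝ) =ᵐ[volume]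
      (Metric.ball (0 : EuclideanSpace ℝ (Fin d)) R).indicator fun _ => (1 : ℝ)) :
    (∀ R : ℝ, 0 < R →
      0 ≤ -(inner ℝ (L₀ (χ R)) (χ R) : ℝ) ∧
      -(inner ℝ (L₀ (χ R)) (χ R) : ℝ) ≤
        (volume (Metric.ball (0 : EuclideanSpace ℝ (Fin d)) R)).toReal *
          ∫ z, a z * (1 - (max (1 - ‖z‖ / R) 0) ^ d)) ∧
    Tendsto
      (fun R : ℝ =>
        ((volume (Metric.ball (0 : EuclideanSpace ℝ (Fin d)) R)).toReal)⁻¹ *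
          (inner ℝ (L₀ (χ R)) (χ R) : ℝ))
      atTop (𝓝 0) := by
  have h_bounds (R : ℝ) (hR : 0 < R) :
      0 ≤ -(inner ℝ (L₀ (χ R)) (χ R) : ℝ) ∧
      -(inner ℝ (L₀ (χ R)) (χ R) : ℝ) ≤
        (volume (ball (0 : EuclideanSpace ℝ (Fin d)) R)).toReal *
          ∫ z, a z * (1 - (max (1 - ‖z‖ / R) 0) ^ d) := by
    have h := neg_nonlocalQuadraticForm_indicator_ball_mem_Icc ha_nonneg ha_int hR
    rw [finrank_euclideanSpace_fin] at h
    rw [inner_eq_nonlocalQuadraticForm (hL₀ _) (hχ R)]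
    exact h
  refine ⟨h_bounds,
    squeeze_zero_norm' ?_ (tendsto_integral_mul_one_sub_max_one_sub_div_pow ha_int d)⟩
  filter_upwards [eventually_gt_atTop 0] with R hR
  obtain ⟨h_nonneg, h_le⟩ := h_bounds R hR
  have h_vol : 0 < (volume (ball (0 : EuclideanSpace ℝ (Fin d)) R)).toReal :=
    ENNReal.toReal_pos (measure_ball_pos volume 0 hR).ne' measure_ball_lt_top.ne
  rw [norm_mul, norm_inv, Real.norm_of_nonneg h_vol.le, Real.norm_of_nonpos (by linarith),
    inv_mul_le_iff₀ h_vol]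
  exact h_le

/-- For the indicator `χ_{B_R}` of the ball `B_R = {|x| < R}`,
`0 ≤ −⟨L₀χ_{B_R}, χ_{B_R}⟩ ≤ vol(B_R) ∫ a(z)(1 − ((1 − |z|/R)₊)^d) dz`, and consequently
`vol(B_R)⁻¹ ⟨L₀χ_{B_R}, χ_{B_R}⟩ → 0` as `R → ∞`. -/
theorem quadratic_form_indicator_ball (d : ℕ) (hd : 1 ≤ d)
    (a : EuclideanSpace ℝ (Fin d) → ℝ)
    (ha_cont : Continuous a) (ha_bdd : ∃ C, ∀ x, |a x| ≤ C)
    (ha_nonneg : ∀ x, 0 ≤ a x) (ha_even : ∀ x, a (-x) = a x)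
    (ha_int : Integrable a) (ha_mass : ∫ x, a x = 1)
    (L₀ : Lp ℝ 2 (volume : Measure (EuclideanSpace ℝ (Fin d))) →L[ℝ]
          Lp ℝ 2 (volume : Measure (EuclideanSpace ℝ (Fin d))))
    (hL₀ : ∀ u : Lp ℝ 2 (volume : Measure (EuclideanSpace ℝ (Fin d))),
      (L₀ u : EuclideanSpace ℝ (Fin d) → ℝ) =ᵐ[volume] fun x => ∫ y, a (x - y) * (u y - u x))
    (χ : ℝ → Lp ℝ 2 (volume : Measure (EuclideanSpace ℝ (Fin d))))
    (hχ : ∀ R : ℝ, (χ R : EuclideanSpace ℝ (Fin d) → ℝ) =ᵐ[volume]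
      (Metric.ball (0 : EuclideanSpace ℝ (Fin d)) R).indicator fun _ => (1 : ℝ)) :
    (∀ R : ℝ, 0 < R →
      0 ≤ -(inner ℝ (L₀ (χ R)) (χ R) : ℝ) ∧
      -(inner ℝ (L₀ (χ R)) (χ R) : ℝ) ≤
        (volume (Metric.ball (0 : EuclideanSpace ℝ (Fin d)) R)).toReal *
          ∫ z, a z * (1 - (max (1 - ‖z‖ / R) 0) ^ d)) ∧
    Tendsto
      (fun R : ℝ =>
        ((volume (Metric.ball (0 : EuclideanSpace ℝ (Fin d)) R)).toReal)⁻¹ *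
          (inner ℝ (L₀ (χ R)) (χ R) : ℝ))
      atTop (𝓝 0) :=
  quadratic_form_indicator_ball_general d a ha_nonneg ha_int L₀ hL₀ χ hχ
end
end

section
/- Suppose λ > 0 is the maximum of the spectrum of L, λ is an isolated point of the spectrum, and the eigenspace {u ∈ L² : Lu = λu} is one-dimensional, spanned by ψ ∈ L²(ℝ^d) with ‖ψ‖_{L²} = 1 and ψ > 0 almost everywhere. Then for every u₀ ∈ L²(ℝ^d) with u₀ ≥ 0 almost everywhere and u₀ ≠ 0, and every bounded measurable set D ⊂ ℝ^d of positive Lebesgue measure, ∫_D (e^{tL} u₀)(x) dx → +∞ as t → ∞. -/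
/-!
Let `A = L - λ`. Since `λ` is the top of the spectrum of the self-adjoint `L`, the quadratic
form of `A` is nonpositive, so `t ↦ ‖e^{tA} v‖` is nonincreasing. As `A` is self-adjoint,
`⟪e^{sA} v, e^{tA} v⟫ = ‖e^{(s+t)/2 • A} v‖²`, which makes `e^{tA} v` Cauchy. Its limit is fixed
by every `e^{sA}`, hence lies in `ker A`, and differs from `v` by a vector orthogonal to `ker A`.
So `e^{tA} u₀` tends to the projection of `u₀` on `ker A = ℝ ψ`, namely `c ψ` with
`c = ⟪ψ, u₀⟫ / ‖ψ‖² > 0`. Therefore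
`∫_D e^{tL} u₀ = e^{λt} ⟪𝟙_D, e^{tA} u₀⟫ ~ e^{λt} c ∫_D ψ → ∞`, as `λ > 0` and `∫_D ψ > 0`.
-/

open MeasureTheory Filter Topology
open scoped RealInnerProductSpace

section BanachAlgebra

variable {𝔸 : Type*} [NormedRing 𝔸] [NormedAlgebra ℝ 𝔸] [CompleteSpace 𝔸]

-- `NormedSpace.exp_add_of_commute` wants a `NormedAlgebra ℚ` instance, which is not inferred here
theorem exp_add_of_commute_real {x y : 𝔸} (h : Commute x y) :
    NormedSpace.exp (x + y) = NormedSpace.exp x * NormedSpace.exp y :=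
  NormedSpace.exp_add_of_commute_of_mem_ball (𝕂 := ℝ) h
    (by simp [NormedSpace.expSeries_radius_eq_top])
    (by simp [NormedSpace.expSeries_radius_eq_top])

end BanachAlgebra

section Operator

variable {E : Type*} [NormedAddCommGroup E] [NormedSpace ℝ E]

theorem ker_sub_algebraMap_eq_span_singleton {T : E →L[ℝ] E} {μ : ℝ} {ψ : E}
    (hψ : T ψ = μ • ψ) (hspan : ∀ φ, T φ = μ • φ → ∃ c : ℝ, φ = c • ψ) :
    LinearMap.ker (T - algebraMap ℝ (E →L[ℝ] E) μ).toLinearMap = ℝ ∙ ψ := by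
  ext φ
  simp only [LinearMap.mem_ker, ContinuousLinearMap.coe_coe, sub_apply,
    Algebra.algebraMap_eq_smul_one, smul_apply, one_apply_eq_self, sub_eq_zero,
    Submodule.mem_span_singleton]
  refine ⟨fun h => (hspan φ h).imp fun c hc => hc.symm, ?_⟩
  rintro ⟨c, rfl⟩
  rw [map_smul, hψ, smul_comm]

variable [CompleteSpace E]

theorem exp_add_smul (A : E →L[ℝ] E) (s t : ℝ) :
    NormedSpace.exp ((s + t) • A) = NormedSpace.exp (s • A) * NormedSpace.exp (t • A) := by
  rw [add_smul, exp_add_of_commute_real (((Commute.refl A).smul_left s).smul_right t)]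

theorem exp_smul_add_algebraMap (A : E →L[ℝ] E) (t μ : ℝ) :
    NormedSpace.exp (t • (A + algebraMap ℝ (E →L[ℝ] E) μ)) =
      Real.exp (t * μ) • NormedSpace.exp (t • A) := by
  have h : t • algebraMap ℝ (E →L[ℝ] E) μ = algebraMap ℝ (E →L[ℝ] E) (t * μ) := by
    rw [Algebra.smul_def, ← map_mul]
  rw [smul_add, h, exp_add_of_commute_real (Algebra.commute_algebraMap_right _ _),
    ← NormedSpace.algebraMap_exp_comm, ← Algebra.commutes, ← Algebra.smul_def,
    Real.exp_eq_exp_ℝ]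

theorem hasDerivAt_exp_smul_apply (A : E →L[ℝ] E) (v : E) (s : ℝ) :
    HasDerivAt (fun t : ℝ => NormedSpace.exp (t • A) v) (A (NormedSpace.exp (s • A) v)) s := by
  simpa using (hasDerivAt_exp_smul_const' A s).clm_apply (hasDerivAt_const s v)

theorem exp_smul_apply_eq_self_iff (A : E →L[ℝ] E) (v : E) :
    (∀ t : ℝ, NormedSpace.exp (t • A) v = v) ↔ A v = 0 := by
  constructor
  · intro h
    have hconst : HasDerivAt (fun t : ℝ => NormedSpace.exp (t • A) v) 0 0 := by
      simpa only [h] using hasDerivAt_const (0 : ℝ) v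
    simpa using (hasDerivAt_exp_smul_apply A v 0).unique hconst
  · intro hv t
    have hderiv (s : ℝ) : HasDerivAt (fun t : ℝ => NormedSpace.exp (t • A) v) 0 s := by
      simpa [hv] using (hasDerivAt_exp_smul_const A s).clm_apply (hasDerivAt_const s v)
    simpa using is_const_of_deriv_eq_zero (fun s => (hderiv s).differentiableAt)
      (fun s => (hderiv s).deriv) t 0

end Operator

section Hilbert

variable {E : Type*} [NormedAddCommGroup E] [InnerProductSpace ℝ E] [CompleteSpace E]
  {A : E →L[ℝ] E}

theorem IsSelfAdjoint.inner_apply_self_le_of_spectrum_le (hA : IsSelfAdjoint A)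
    {m : ℝ} (hm : ∀ μ ∈ spectrum ℝ A, μ ≤ m) (x : E) : ⟪A x, x⟫ ≤ m * ‖x‖ ^ 2 := by
  rcases subsingleton_or_nontrivial E with hE | hE
  · simp [Subsingleton.elim x 0]
  -- after this shift the spectrum is positive, so the norm (= spectral radius) is its top
  set c := ‖A‖ + |m| + 1
  set S := A + algebraMap ℝ (E →L[ℝ] E) c
  have hS : IsSelfAdjoint S := hA.add (.algebraMap _ (.all c))
  have hspec : ∀ μ ∈ spectrum ℝ S, ‖μ‖ ≤ m + c := by
    intro μ hμ
    rw [show S = algebraMap ℝ _ c + A from add_comm _ _, ← spectrum.singleton_add_eq] at hμ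
    obtain ⟨_, rfl, ν, hν, rfl⟩ := hμ
    have := spectrum.norm_le_norm_of_mem hν
    rw [Real.norm_eq_abs, abs_le] at this ⊢
    constructor <;> linarith [hm ν hν, abs_nonneg m, neg_abs_le m]
  have hnorm : ‖S‖ ≤ m + c := by
    have h : ENNReal.ofReal ‖S‖ ≤ ENNReal.ofReal (m + c) := by
      rw [ofReal_norm, enorm_eq_nnnorm, ← S.spectralRadius_eq_nnnorm hS]
      exact iSup₂_le fun μ hμ => by
        rw [← enorm_eq_nnnorm, ← ofReal_norm]; exact ENNReal.ofReal_le_ofReal (hspec μ hμ)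
    exact (ENNReal.ofReal_le_ofReal_iff (by linarith [neg_abs_le m, norm_nonneg A])).mp h
  calc ⟪A x, x⟫ = ⟪S x, x⟫ - c * ‖x‖ ^ 2 := by
        simp [S, Algebra.algebraMap_eq_smul_one, inner_add_left, real_inner_smul_left]
    _ ≤ ‖S‖ * ‖x‖ ^ 2 - c * ‖x‖ ^ 2 := by
        grw [real_inner_le_norm, S.le_opNorm, mul_assoc, ← sq]
    _ ≤ m * ‖x‖ ^ 2 := by nlinarith [sq_nonneg ‖x‖]

theorem antitone_norm_sq_exp_smul_apply (hneg : ∀ x, ⟪A x, x⟫ ≤ 0) (v : E) :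
    Antitone fun t : ℝ => ‖NormedSpace.exp (t • A) v‖ ^ 2 := by
  have hderiv (s : ℝ) : HasDerivAt (fun t : ℝ => ‖NormedSpace.exp (t • A) v‖ ^ 2)
      (2 * ⟪NormedSpace.exp (s • A) v, A (NormedSpace.exp (s • A) v)⟫) s :=
    (hasDerivAt_exp_smul_apply A v s).norm_sq
  refine antitone_of_deriv_nonpos (fun s => (hderiv s).differentiableAt) fun s => ?_
  rw [(hderiv s).deriv, real_inner_comm]
  linarith [hneg (NormedSpace.exp (s • A) v)]

theorem IsSelfAdjoint.exp_smul (hA : IsSelfAdjoint A) (t : ℝ) :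
    IsSelfAdjoint (NormedSpace.exp (t • A)) :=
  ((IsSelfAdjoint.all t).smul hA).exp

theorem IsSelfAdjoint.inner_exp_smul_apply (hA : IsSelfAdjoint A) (s t : ℝ) (u v : E) :
    ⟪NormedSpace.exp (s • A) u, NormedSpace.exp (t • A) v⟫ =
      ⟪u, NormedSpace.exp ((s + t) • A) v⟫ := by
  rw [exp_add_smul, mul_apply_eq_comp]
  exact (hA.exp_smul s).isSymmetric u _

theorem IsSelfAdjoint.cauchySeq_exp_smul_apply (hA : IsSelfAdjoint A)
    (hneg : ∀ x, ⟪A x, x⟫ ≤ 0) (v : E) :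
    CauchySeq fun t : ℝ => NormedSpace.exp (t • A) v := by
  set f : ℝ → ℝ := fun t => ‖NormedSpace.exp (t • A) v‖ ^ 2
  obtain ⟨ℓ, hℓ⟩ : ∃ ℓ, Tendsto f atTop (𝓝 ℓ) :=
    ⟨_, tendsto_atTop_ciInf (antitone_norm_sq_exp_smul_apply hneg v)
      ⟨0, by rintro _ ⟨t, rfl⟩; positivity⟩⟩
  have hdist (s t : ℝ) : dist (NormedSpace.exp (s • A) v) (NormedSpace.exp (t • A) v) =
      √(f s + f t - 2 * f ((s + t) / 2)) := by
    have hcross :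
        ⟪NormedSpace.exp (s • A) v, NormedSpace.exp (t • A) v⟫ = f ((s + t) / 2) := by
      rw [hA.inner_exp_smul_apply, ← add_halves (s + t), ← hA.inner_exp_smul_apply,
        add_halves, real_inner_self_eq_norm_sq]
    rw [dist_eq_norm, ← Real.sqrt_sq (norm_nonneg _), norm_sub_sq_real, hcross]
    congr 1
    ring
  rw [cauchySeq_iff_tendsto_dist_atTop_0, ← prod_atTop_atTop_eq]
  have hmid : Tendsto (fun p : ℝ × ℝ => (p.1 + p.2) / 2) (atTop ×ˢ atTop) atTop :=
    (tendsto_fst.atTop_add_atTop tendsto_snd).atTop_div_const two_pos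
  have hlim : Tendsto (fun p : ℝ × ℝ => √(f p.1 + f p.2 - 2 * f ((p.1 + p.2) / 2)))
      (atTop ×ˢ atTop) (𝓝 √(ℓ + ℓ - 2 * ℓ)) :=
    (((hℓ.comp tendsto_fst).add (hℓ.comp tendsto_snd)).sub ((hℓ.comp hmid).const_mul 2)).sqrt
  rw [show ℓ + ℓ - 2 * ℓ = 0 by ring, Real.sqrt_zero] at hlim
  exact hlim.congr fun p => (hdist p.1 p.2).symm

theorem IsSelfAdjoint.tendsto_exp_smul_apply (hA : IsSelfAdjoint A)
    (hneg : ∀ x, ⟪A x, x⟫ ≤ 0) (v : E) : Tendsto (fun t : ℝ => NormedSpace.exp (t • A) v) atTop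
      (𝓝 ((LinearMap.ker A.toLinearMap).starProjection v)) := by
  obtain ⟨w, hw⟩ := cauchySeq_tendsto_of_complete (hA.cauchySeq_exp_smul_apply hneg v)
  have hfix (s : ℝ) : NormedSpace.exp (s • A) w = w := by
    refine tendsto_nhds_unique (((NormedSpace.exp (s • A)).continuous.tendsto w).comp hw) ?_
    simpa only [Function.comp_def, id_eq, ← mul_apply_eq_comp, ← exp_add_smul] using
      hw.comp (tendsto_atTop_add_const_left atTop s tendsto_id)
  have horth : ∀ k ∈ LinearMap.ker A.toLinearMap, ⟪v - w, k⟫ = 0 := by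
    intro k hk
    have hconst (t : ℝ) : ⟪NormedSpace.exp (t • A) v, k⟫ = ⟪v, k⟫ :=
      calc ⟪NormedSpace.exp (t • A) v, k⟫ = ⟪v, NormedSpace.exp (t • A) k⟫ :=
            (hA.exp_smul t).isSymmetric v k
        _ = ⟪v, k⟫ := by rw [(exp_smul_apply_eq_self_iff A k).mpr hk t]
    have hlim : ⟪w, k⟫ = ⟪v, k⟫ :=
      tendsto_nhds_unique (hw.inner tendsto_const_nhds)
        (by simp only [hconst]; exact tendsto_const_nhds)
    rw [inner_sub_left, hlim, sub_self]
  rwa [Submodule.eq_starProjection_of_mem_of_inner_eq_zero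
    ((exp_smul_apply_eq_self_iff A w).mp hfix) horth]

end Hilbert

namespace MeasureTheory.L2

variable {α : Type*} [MeasurableSpace α] {μ : Measure α}

theorem inner_pos_of_ae_pos_of_ae_nonneg {f g : Lp ℝ 2 μ} (hf : ∀ᵐ x ∂μ, 0 < f x)
    (hg : ∀ᵐ x ∂μ, 0 ≤ g x) (hg0 : g ≠ 0) : 0 < ⟪f, g⟫ := by
  have hnonneg : 0 ≤ᵐ[μ] fun x => ⟪f x, g x⟫ := by
    filter_upwards [hf, hg] with x hfx hgx
    simpa using mul_nonneg hgx hfx.le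
  rw [inner_def]
  refine (integral_nonneg_of_ae hnonneg).lt_of_ne fun h => hg0 ?_
  rw [Lp.eq_zero_iff_ae_eq_zero]
  filter_upwards [(integral_eq_zero_iff_of_nonneg_ae hnonneg (integrable_inner f g)).mp h.symm,
    hf] with x hx hfx
  simpa [hfx.ne'] using hx

theorem inner_indicatorConstLp_one_pos {s : Set α} (hs : MeasurableSet s) (hμs : μ s ≠ ⊤)
    (hμs_pos : 0 < μ s) {f : Lp ℝ 2 μ} (hf : ∀ᵐ x ∂μ, 0 < f x) :
    0 < ⟪indicatorConstLp 2 hs hμs (1 : ℝ), f⟫ := by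
  have hne : indicatorConstLp 2 hs hμs (1 : ℝ) ≠ 0 := by
    rw [← norm_pos_iff, norm_indicatorConstLp two_ne_zero ENNReal.ofNat_ne_top, norm_one,
      one_mul]
    exact Real.rpow_pos_of_pos (ENNReal.toReal_pos hμs_pos.ne' hμs) _
  rw [real_inner_comm]
  refine inner_pos_of_ae_pos_of_ae_nonneg hf ?_ hne
  filter_upwards [indicatorConstLp_coeFn (p := 2) (hs := hs) (hμs := hμs) (c := (1 : ℝ))]
    with x hx
  rw [hx]
  exact Set.indicator_nonneg (fun _ _ => zero_le_one) x

end MeasureTheory.L2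

theorem mass_in_bounded_domain_tendsto_infinity_general (d : ℕ)
    (L₀ : Lp ℝ 2 (volume : Measure (EuclideanSpace ℝ (Fin d))) →L[ℝ]
          Lp ℝ 2 (volume : Measure (EuclideanSpace ℝ (Fin d))))
    (Vop : Lp ℝ 2 (volume : Measure (EuclideanSpace ℝ (Fin d))) →L[ℝ]
           Lp ℝ 2 (volume : Measure (EuclideanSpace ℝ (Fin d))))
    (hsa : IsSelfAdjoint (L₀ + Vop))
    (lam : ℝ) (hlam_pos : 0 < lam)
    (hlam_max : ∀ μ ∈ spectrum ℝ (L₀ + Vop), μ ≤ lam)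
    (ψ : Lp ℝ 2 (volume : Measure (EuclideanSpace ℝ (Fin d))))
    (hψ_pos : ∀ᵐ x ∂(volume : Measure (EuclideanSpace ℝ (Fin d))), 0 < ψ x)
    (hψ_eig : (L₀ + Vop) ψ = lam • ψ)
    (hψ_span : ∀ φ : Lp ℝ 2 (volume : Measure (EuclideanSpace ℝ (Fin d))),
      (L₀ + Vop) φ = lam • φ → ∃ c : ℝ, φ = c • ψ) :
    ∀ u₀ : Lp ℝ 2 (volume : Measure (EuclideanSpace ℝ (Fin d))),
      (∀ᵐ x ∂(volume : Measure (EuclideanSpace ℝ (Fin d))), 0 ≤ u₀ x) → u₀ ≠ 0 →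
      ∀ D : Set (EuclideanSpace ℝ (Fin d)),
        MeasurableSet D → Bornology.IsBounded D → 0 < volume D →
        Tendsto
          (fun t : ℝ => ∫ x in D, ((NormedSpace.exp (t • (L₀ + Vop))) u₀ : _ → ℝ) x)
          atTop atTop := by
  intro u₀ hu₀ hu₀_ne D hD hD_bdd hD_pos
  have hker := ker_sub_algebraMap_eq_span_singleton hψ_eig hψ_span
  set A := L₀ + Vop - algebraMap ℝ _ lam
  have hA : IsSelfAdjoint A := hsa.sub (.algebraMap _ (.all lam))
  have hA_neg (x : Lp ℝ 2 (volume : Measure (EuclideanSpace ℝ (Fin d)))) : ⟪A x, x⟫ ≤ 0 := by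
    simpa [A, Algebra.algebraMap_eq_smul_one, inner_sub_left, real_inner_smul_left,
      real_inner_self_eq_norm_sq] using hsa.inner_apply_self_le_of_spectrum_le hlam_max x
  have hD_fin : volume D ≠ ⊤ := hD_bdd.measure_lt_top.ne
  set χ := indicatorConstLp 2 hD hD_fin (1 : ℝ)
  have hmass (t : ℝ) : ∫ x in D, ((NormedSpace.exp (t • (L₀ + Vop))) u₀ : _ → ℝ) x =
      Real.exp (t * lam) * ⟪χ, NormedSpace.exp (t • A) u₀⟫ := by
    rw [← L2.inner_indicatorConstLp_one hD hD_fin,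
      show L₀ + Vop = A + algebraMap ℝ _ lam from (sub_add_cancel _ _).symm,
      exp_smul_add_algebraMap, smul_apply]
    exact inner_smul_right _ _ _
  have hlim : Tendsto (fun t : ℝ => ⟪χ, NormedSpace.exp (t • A) u₀⟫) atTop
      (𝓝 (⟪ψ, u₀⟫ / ‖ψ‖ ^ 2 * ⟪χ, ψ⟫)) := by
    have := (tendsto_const_nhds (x := χ)).inner (𝕜 := ℝ) (hA.tendsto_exp_smul_apply hA_neg u₀)
    simpa only [hker, Submodule.starProjection_singleton, real_inner_smul_right,
      RCLike.ofReal_real_eq_id, id_eq] using this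
  have hψu₀ : 0 < ⟪ψ, u₀⟫ := L2.inner_pos_of_ae_pos_of_ae_nonneg hψ_pos hu₀ hu₀_ne
  have hψ : 0 < ‖ψ‖ := norm_pos_iff.mpr (by rintro rfl; simp at hψu₀)
  have hχψ : 0 < ⟪χ, ψ⟫ := L2.inner_indicatorConstLp_one_pos hD hD_fin hD_pos hψ_pos
  exact ((Real.tendsto_exp_atTop.comp (tendsto_id.atTop_mul_const hlam_pos)).atTop_mul_pos
    (by positivity) hlim).congr fun t => (hmass t).symm

/-- Under the same spectral hypotheses as in Statement 18, for every
`u₀ ≥ 0`, `u₀ ≠ 0` and every bounded measurable `D` of positive Lebesgue measure,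
`∫_D (e^{tL} u₀)(x) dx → +∞` as `t → ∞`. -/
theorem mass_in_bounded_domain_tendsto_infinity (d : ℕ) (hd : 1 ≤ d)
    (a : EuclideanSpace ℝ (Fin d) → ℝ)
    (ha_cont : Continuous a) (ha_bdd : ∃ C, ∀ x, |a x| ≤ C)
    (ha_nonneg : ∀ x, 0 ≤ a x) (ha_even : ∀ x, a (-x) = a x)
    (ha_int : Integrable a) (ha_mass : ∫ x, a x = 1)
    (L₀ : Lp ℝ 2 (volume : Measure (EuclideanSpace ℝ (Fin d))) →L[ℝ]
          Lp ℝ 2 (volume : Measure (EuclideanSpace ℝ (Fin d))))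
    (hL₀ : ∀ u : Lp ℝ 2 (volume : Measure (EuclideanSpace ℝ (Fin d))),
      (L₀ u : EuclideanSpace ℝ (Fin d) → ℝ) =ᵐ[volume] fun x => ∫ y, a (x - y) * (u y - u x))
    (V : EuclideanSpace ℝ (Fin d) → ℝ) (hV_cont : Continuous V)
    (hV01 : ∀ x, 0 ≤ V x ∧ V x ≤ 1)
    (hV0 : Tendsto V (cocompact (EuclideanSpace ℝ (Fin d))) (𝓝 0))
    (Vop : Lp ℝ 2 (volume : Measure (EuclideanSpace ℝ (Fin d))) →L[ℝ]
           Lp ℝ 2 (volume : Measure (EuclideanSpace ℝ (Fin d))))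
    (hVop : ∀ u : Lp ℝ 2 (volume : Measure (EuclideanSpace ℝ (Fin d))),
      (Vop u : EuclideanSpace ℝ (Fin d) → ℝ) =ᵐ[volume] fun x => V x * u x)
    (hsa : IsSelfAdjoint (L₀ + Vop))
    (lam : ℝ) (hlam_pos : 0 < lam)
    (hlam_mem : lam ∈ spectrum ℝ (L₀ + Vop))
    (hlam_max : ∀ μ ∈ spectrum ℝ (L₀ + Vop), μ ≤ lam)
    (hlam_isolated : ∃ ε > 0, ∀ μ ∈ spectrum ℝ (L₀ + Vop), |μ - lam| < ε → μ = lam)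
    (ψ : Lp ℝ 2 (volume : Measure (EuclideanSpace ℝ (Fin d))))
    (hψ_norm : ‖ψ‖ = 1)
    (hψ_pos : ∀ᵐ x ∂(volume : Measure (EuclideanSpace ℝ (Fin d))), 0 < ψ x)
    (hψ_eig : (L₀ + Vop) ψ = lam • ψ)
    (hψ_span : ∀ φ : Lp ℝ 2 (volume : Measure (EuclideanSpace ℝ (Fin d))),
      (L₀ + Vop) φ = lam • φ → ∃ c : ℝ, φ = c • ψ) :
    ∀ u₀ : Lp ℝ 2 (volume : Measure (EuclideanSpace ℝ (Fin d))),
      (∀ᵐ x ∂(volume : Measure (EuclideanSpace ℝ (Fin d))), 0 ≤ u₀ x) → u₀ ≠ 0 →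
      ∀ D : Set (EuclideanSpace ℝ (Fin d)),
        MeasurableSet D → Bornology.IsBounded D → 0 < volume D →
        Tendsto
          (fun t : ℝ => ∫ x in D, ((NormedSpace.exp (t • (L₀ + Vop))) u₀ : _ → ℝ) x)
          atTop atTop :=
  mass_in_bounded_domain_tendsto_infinity_general d L₀ Vop hsa lam hlam_pos hlam_max ψ hψ_pos hψ_eig
    hψ_span
end
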